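/- arXiv:2307.09053 — 2 statements merged into one kernel-verified Lean document; each statement's English description precedes it below -/
import Mathlib

section
/- Let X be a compact topological space and let H be an additive subgroup of the space C(X, ℝ) of real-valued continuous functions on X, equipped with the supremum norm and the pointwise order. Assume: (i) every element of H is the difference of two elements of H that are nonnegative (pointwise); and (ii) for every nonnegative x ∈ H and every natural number n ≥ 1 there exists a nonnegative y ∈ H such that n·y ≤ x ≤ (n+1)·y pointwise. Then the norm-closure of H in C(X, ℝ) is an ℝ-linear subspace of C(X, ℝ); in particular, for every x ∈ H and every real number c, the function c·x lies in the closure of H. -/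
/-!
Let `x ≥ 0` lie in `H` and `k ≥ 1`. Divide `x` weakly by `n k` with `n` large:
`n k • y ≤ x ≤ (n k + 1) • y` gives `0 ≤ k⁻¹ • x - n • y ≤ k⁻¹ • y`, and `‖y‖ ≤ ‖x‖ / (n k)`,
so `n • y ∈ H` approximates `k⁻¹ • x`. Hence the closure of `H` contains the rational, and by
density the real, multiples of every nonnegative element of `H`; since `H` is generated by its
nonnegative elements, its closure is a real subspace.
-/

namespace ContinuousMap

variable {X β : Type*} [TopologicalSpace X] [CompactSpace X]
  [NormedAddCommGroup β] [Lattice β] [HasSolidNorm β] [IsOrderedAddMonoid β]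

instance instHasSolidNorm : HasSolidNorm C(X, β) where
  solid _ g h := (norm_le _ (norm_nonneg g)).2 fun t =>
    (HasSolidNorm.solid (h t)).trans (norm_coe_le_norm g t)

end ContinuousMap

section Closure

variable {R E : Type*} [Ring R] [TopologicalSpace E] [AddCommGroup E] [IsTopologicalAddGroup E]
  [Module R E] [ContinuousConstSMul R E]

theorem AddSubgroup.exists_submodule_eq_topologicalClosure {S : AddSubgroup E}
    (h : ∀ (c : R), ∀ x ∈ S, c • x ∈ S.topologicalClosure) :
    ∃ V : Submodule R E, (V : Set E) = S.topologicalClosure :=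
  ⟨{ S.topologicalClosure with
      smul_mem' := fun c _ hz =>
        closure_minimal (h c) (isClosed_closure.preimage (continuous_const_smul c)) hz }, rfl⟩

end Closure

theorem smul_mem_closure_of_forall_ratCast_smul {E : Type*} [TopologicalSpace E] [AddCommGroup E]
    [Module ℝ E] [ContinuousSMul ℝ E] {s : Set E} {x : E}
    (h : ∀ q : ℚ, (q : ℝ) • x ∈ closure s) (c : ℝ) : c • x ∈ closure s :=
  Rat.denseRange_cast.induction_on c
    (isClosed_closure.preimage (continuous_id.smul continuous_const)) h

theorem ratCast_smul_mem_topologicalClosure {E : Type*} [TopologicalSpace E] [AddCommGroup E]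
    [IsTopologicalAddGroup E] [Module ℝ E] {S : AddSubgroup E} {x : E}
    (h : ∀ k : ℕ, 0 < k → (k : ℝ)⁻¹ • x ∈ S.topologicalClosure) (q : ℚ) :
    (q : ℝ) • x ∈ S.topologicalClosure := by
  have hq : (q : ℝ) • x = q.num • ((q.den : ℝ)⁻¹ • x) := by
    rw [← Int.cast_smul_eq_zsmul ℝ, smul_smul, Rat.cast_def, div_eq_mul_inv]
  rw [hq]
  exact S.topologicalClosure.zsmul_mem (h q.den q.pos) q.num

section SolidNorm

variable {E : Type*} [NormedAddCommGroup E] [Lattice E] [HasSolidNorm E] [IsOrderedAddMonoid E]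

theorem norm_le_norm_of_nonneg_of_le {a b : E} (ha : 0 ≤ a) (hab : a ≤ b) : ‖a‖ ≤ ‖b‖ :=
  HasSolidNorm.solid (by rwa [abs_of_nonneg ha, abs_of_nonneg (ha.trans hab)])

variable [NormedSpace ℝ E] [IsOrderedModule ℝ E]

theorem mul_norm_le_norm_of_smul_le {x y : E} {r : ℝ} (hr : 0 ≤ r) (hy : 0 ≤ y) (h : r • y ≤ x) :
    r * ‖y‖ ≤ ‖x‖ := by
  simpa only [norm_smul, Real.norm_of_nonneg hr] using
    norm_le_norm_of_nonneg_of_le (smul_nonneg hr hy) h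

theorem norm_inv_smul_sub_smul_le {x y : E} {n k : ℝ} (hk : 0 < k)
    (hlow : (n * k) • y ≤ x) (hup : x ≤ (n * k + 1) • y) :
    ‖k⁻¹ • x - n • y‖ ≤ k⁻¹ * ‖y‖ := by
  have hk' : 0 ≤ k⁻¹ := inv_nonneg.2 hk.le
  have hnk : k⁻¹ * (n * k) = n := by field_simp
  have hlow' : n • y ≤ k⁻¹ • x := by
    simpa only [smul_smul, hnk] using smul_le_smul_of_nonneg_left hlow hk'
  have hup' : k⁻¹ • x ≤ n • y + k⁻¹ • y := by
    simpa only [smul_add, add_smul, one_smul, smul_smul, hnk] using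
      smul_le_smul_of_nonneg_left hup hk'
  calc ‖k⁻¹ • x - n • y‖ ≤ ‖k⁻¹ • y‖ :=
        norm_le_norm_of_nonneg_of_le (sub_nonneg.2 hlow') (sub_le_iff_le_add'.2 hup')
    _ = k⁻¹ * ‖y‖ := by rw [norm_smul, Real.norm_of_nonneg hk']

def AddSubgroup.IsWeaklyDivisible (S : AddSubgroup E) : Prop :=
  ∀ x ∈ S, 0 ≤ x → ∀ n : ℕ, 1 ≤ n → ∃ y ∈ S, 0 ≤ y ∧ (n : ℝ) • y ≤ x ∧ x ≤ ((n : ℝ) + 1) • y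

variable {S : AddSubgroup E}

theorem AddSubgroup.IsWeaklyDivisible.inv_natCast_smul_mem_topologicalClosure
    (hS : S.IsWeaklyDivisible) {x : E} (hx : x ∈ S) (hx0 : 0 ≤ x) {k : ℕ} (hk : 0 < k) :
    (k : ℝ)⁻¹ • x ∈ S.topologicalClosure := by
  refine Metric.mem_closure_iff.2 fun ε hε => ?_
  obtain ⟨n, hn⟩ := exists_nat_gt (‖x‖ / ε)
  have hxn : ‖x‖ < n * ε := (div_lt_iff₀ hε).1 hn
  have hn0 : 0 < n := by exact_mod_cast pos_of_mul_pos_left ((norm_nonneg x).trans_lt hxn) hε.le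
  obtain ⟨y, hyS, hy0, hlow, hup⟩ := hS x hx hx0 (n * k) (Nat.mul_pos hn0 hk)
  push_cast at hlow hup
  have hk1 : (1 : ℝ) ≤ k := by exact_mod_cast hk
  have hny : n * k * ‖y‖ ≤ ‖x‖ := mul_norm_le_norm_of_smul_le (by positivity) hy0 hlow
  have hky : k * ‖y‖ < ε :=
    lt_of_mul_lt_mul_left (by rw [← mul_assoc]; linarith) (Nat.cast_nonneg n)
  refine ⟨(n : ℝ) • y, by rw [Nat.cast_smul_eq_nsmul]; exact S.nsmul_mem hyS n, ?_⟩
  rw [dist_eq_norm]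
  calc ‖(k : ℝ)⁻¹ • x - (n : ℝ) • y‖ ≤ (k : ℝ)⁻¹ * ‖y‖ :=
        norm_inv_smul_sub_smul_le (by positivity) hlow hup
    _ ≤ k * ‖y‖ := by gcongr; exact (inv_le_one_of_one_le₀ hk1).trans hk1
    _ < ε := hky

theorem AddSubgroup.IsWeaklyDivisible.smul_mem_topologicalClosure (hS : S.IsWeaklyDivisible)
    (hdiff : ∀ x ∈ S, ∃ a ∈ S, ∃ b ∈ S, 0 ≤ a ∧ 0 ≤ b ∧ x = a - b) {x : E} (hx : x ∈ S)
    (c : ℝ) : c • x ∈ S.topologicalClosure := by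
  have hnonneg : ∀ a ∈ S, 0 ≤ a → c • a ∈ S.topologicalClosure := fun a ha ha0 =>
    smul_mem_closure_of_forall_ratCast_smul
      (ratCast_smul_mem_topologicalClosure fun _ hk =>
        hS.inv_natCast_smul_mem_topologicalClosure ha ha0 hk) c
  obtain ⟨a, ha, b, hb, ha0, hb0, rfl⟩ := hdiff x hx
  rw [smul_sub]
  exact S.topologicalClosure.sub_mem (hnonneg a ha ha0) (hnonneg b hb hb0)

end SolidNorm

theorem closure_is_subspace_of_weakly_divisible_subgroup
    (X : Type*) [TopologicalSpace X] [CompactSpace X]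
    (H : AddSubgroup C(X, ℝ))
    (hdiff : ∀ x ∈ H, ∃ a ∈ H, ∃ b ∈ H, 0 ≤ a ∧ 0 ≤ b ∧ x = a - b)
    (hdiv : ∀ x ∈ H, 0 ≤ x → ∀ n : ℕ, 1 ≤ n →
      ∃ y ∈ H, 0 ≤ y ∧ (n : ℝ) • y ≤ x ∧ x ≤ ((n : ℝ) + 1) • y) :
    (∃ V : Submodule ℝ C(X, ℝ), (V : Set C(X, ℝ)) = closure (H : Set C(X, ℝ))) ∧
      ∀ x ∈ H, ∀ c : ℝ, c • x ∈ closure (H : Set C(X, ℝ)) := by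
  have hH : H.IsWeaklyDivisible := hdiv
  have hsmul : ∀ x ∈ H, ∀ c : ℝ, c • x ∈ closure (H : Set C(X, ℝ)) :=
    fun _ hx c => hH.smul_mem_topologicalClosure hdiff hx c
  exact ⟨H.exists_submodule_eq_topologicalClosure fun c x hx => hsmul x hx c, hsmul⟩
end

section
/- Let G be an additive subgroup of ℝ × ℝ containing the element (1,1). Suppose that for every natural number n ≥ 1 there exist elements g = (g₁, g₂) and h = (h₁, h₂) of G with g₁, g₂, h₁, h₂ ≥ 0, with (1,1) = n·g + (n+1)·h, and with g₁ ≠ g₂. Then for every nonzero ℝ-linear functional f : ℝ × ℝ → ℝ, the image f(G) is a dense subgroup of ℝ. -/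
/-!
If `f` vanished at both `g` and `h`, it would vanish at `(1, 1) = n • g + (n + 1) • h` and at `g`,
which span `ℝ²` because `g.1 ≠ g.2`; so `f g` or `f h` is a nonzero element of `f '' G`. The
coordinates of `g` and `h` lie in `[0, 1/n]`, so that element has absolute value at most `‖f‖ / n`,
and an additive subgroup of `ℝ` with arbitrarily small nonzero elements is dense.
-/

theorem AddSubgroup.dense_of_exists_ne_zero_abs_lt {G : Type*} [AddCommGroup G] [LinearOrder G]
    [IsOrderedAddMonoid G] [TopologicalSpace G] [OrderTopology G] [Archimedean G]
    (S : AddSubgroup G) (hS : ∀ ε > 0, ∃ x ∈ S, x ≠ 0 ∧ |x| < ε) : Dense (S : Set G) :=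
  S.dense_of_not_isolated_zero fun ε hε =>
    let ⟨x, hxS, hx0, hxε⟩ := hS ε hε
    ⟨|x|, abs_mem_iff.2 hxS, abs_pos.2 hx0, hxε⟩

theorem LinearMap.eq_zero_of_map_one_one_eq_zero_of_map_eq_zero {K M : Type*} [Field K]
    [AddCommGroup M] [Module K M] (f : K × K →ₗ[K] M) {g : K × K} (hg : g.1 ≠ g.2)
    (hf₁ : f (1, 1) = 0) (hfg : f g = 0) : f = 0 := by
  have hfst : f (1, 0) = 0 := by
    have hdecomp : g - g.2 • ((1, 1) : K × K) = (g.1 - g.2) • (1, 0) := by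
      ext <;> simp
    have := congrArg f hdecomp
    rw [map_sub, map_smul, map_smul, hfg, hf₁] at this
    simpa [sub_ne_zero.2 hg] using this.symm
  have hsnd : f (0, 1) = 0 := by
    have hdecomp : ((0, 1) : K × K) = (1, 1) - (1, 0) := by ext <;> simp
    rw [hdecomp, map_sub, hf₁, hfst, sub_zero]
  ext <;> simpa

theorem abs_le_inv_of_mul_add_mul_eq_one {n x y : ℝ} (hn : 0 < n) (hx : 0 ≤ x) (hy : 0 ≤ y)
    (h : n * x + (n + 1) * y = 1) : |x| ≤ n⁻¹ ∧ |y| ≤ n⁻¹ := by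
  refine ⟨?_, ?_⟩ <;> rw [abs_of_nonneg ‹_›, ← one_div, le_div_iff₀ hn] <;> nlinarith

theorem norm_le_inv_of_smul_add_smul_eq_one_one {n : ℝ} (hn : 0 < n) {g h : ℝ × ℝ}
    (hg : 0 ≤ g) (hh : 0 ≤ h) (heq : n • g + (n + 1) • h = (1, 1)) :
    ‖g‖ ≤ n⁻¹ ∧ ‖h‖ ≤ n⁻¹ := by
  have h₁ := abs_le_inv_of_mul_add_mul_eq_one hn hg.1 hh.1 (congrArg Prod.fst heq)
  have h₂ := abs_le_inv_of_mul_add_mul_eq_one hn hg.2 hh.2 (congrArg Prod.snd heq)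
  simp only [norm_prod_le_iff, Real.norm_eq_abs]
  exact ⟨⟨h₁.1, h₂.1⟩, h₁.2, h₂.2⟩

theorem dense_image_of_weakly_divisible_subgroup_of_R2_general
    (G : AddSubgroup (ℝ × ℝ))
    (hdiv : ∀ n : ℕ, 1 ≤ n → ∃ g ∈ G, ∃ h ∈ G,
      0 ≤ g.1 ∧ 0 ≤ g.2 ∧ 0 ≤ h.1 ∧ 0 ≤ h.2 ∧
      ((1, 1) : ℝ × ℝ) = (n : ℝ) • g + ((n : ℝ) + 1) • h ∧ g.1 ≠ g.2) :
    ∀ f : (ℝ × ℝ) →ₗ[ℝ] ℝ, f ≠ 0 → Dense (f '' (G : Set (ℝ × ℝ))) := by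
  intro f hf
  refine (G.map f.toAddMonoidHom).dense_of_exists_ne_zero_abs_lt fun ε hε => ?_
  set C := ‖LinearMap.toContinuousLinearMap f‖
  obtain ⟨n, hn⟩ := exists_nat_gt (C / ε)
  obtain ⟨g, hgG, h, hhG, hg₁, hg₂, hh₁, hh₂, heq, hne⟩ := hdiv (n + 1) n.succ_pos
  push_cast at heq
  have hsmall (p : ℝ × ℝ) (hp : ‖p‖ ≤ ((n : ℝ) + 1)⁻¹) : |f p| < ε :=
    calc |f p| ≤ C * ‖p‖ := (LinearMap.toContinuousLinearMap f).le_opNorm p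
      _ ≤ C * ((n : ℝ) + 1)⁻¹ := by gcongr
      _ < ε := by
        rw [mul_inv_lt_iff₀ (by positivity)]
        rw [div_lt_iff₀ hε] at hn
        nlinarith
  have hfgh : f g ≠ 0 ∨ f h ≠ 0 := by
    by_contra! h0
    refine hf (f.eq_zero_of_map_one_one_eq_zero_of_map_eq_zero hne ?_ h0.1)
    rw [heq, map_add, map_smul, map_smul, h0.1, h0.2, smul_zero, smul_zero, add_zero]
  obtain ⟨hg, hh⟩ := norm_le_inv_of_smul_add_smul_eq_one_one (by positivity)
    ⟨hg₁, hg₂⟩ ⟨hh₁, hh₂⟩ heq.symm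
  rcases hfgh with hfg | hfh
  · exact ⟨f g, ⟨g, hgG, rfl⟩, hfg, hsmall g hg⟩
  · exact ⟨f h, ⟨h, hhG, rfl⟩, hfh, hsmall h hh⟩

theorem dense_image_of_weakly_divisible_subgroup_of_R2
    (G : AddSubgroup (ℝ × ℝ)) (hone : ((1, 1) : ℝ × ℝ) ∈ G)
    (hdiv : ∀ n : ℕ, 1 ≤ n → ∃ g ∈ G, ∃ h ∈ G,
      0 ≤ g.1 ∧ 0 ≤ g.2 ∧ 0 ≤ h.1 ∧ 0 ≤ h.2 ∧
      ((1, 1) : ℝ × ℝ) = (n : ℝ) • g + ((n : ℝ) + 1) • h ∧ g.1 ≠ g.2) :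
    ∀ f : (ℝ × ℝ) →ₗ[ℝ] ℝ, f ≠ 0 → Dense (f '' (G : Set (ℝ × ℝ))) :=
  dense_image_of_weakly_divisible_subgroup_of_R2_general G hdiv
end
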